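/- arXiv:2003.13381 — 2 statements merged into one kernel-verified Lean document; each statement's English description precedes it below -/
import Mathlib

section
/- Let S = ⟨v₀,…,v_h⟩ be a numerical semigroup generated by a characteristic sequence (v₀,…,v_h), with e_k = gcd(v₀,…,v_k) and n_k = e_{k−1}/e_k. Then the conductor of S equals c(S) = Σ_{i=1}^{h} (n_i − 1)·v_i − v₀ + 1. -/
/-- A numerical semigroup: a subset of ℕ containing 0, closed under addition,
with finite complement. -/
def IsNumericalSemigroup (S : Set ℕ) : Prop :=
  0 ∈ S ∧ (∀ a ∈ S, ∀ b ∈ S, a + b ∈ S) ∧ Sᶜ.Finite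

/-- Frobenius number, as an integer (so that F(ℕ) = -1). -/
noncomputable def Frob (S : Set ℕ) : ℤ :=
  sSup (((fun n : ℕ => (n : ℤ)) '' Sᶜ) ∪ {-1})

/-- Submonoid of ℕ generated by a set. -/
def GenSg (A : Set ℕ) : Set ℕ := (AddSubmonoid.closure A : Set ℕ)

/-- The gluing S ⊕_{d,γ} ℕ = d·S + ℕ·γ. -/
def Gluing (S : Set ℕ) (d γ : ℕ) : Set ℕ :=
  {x | ∃ s ∈ S, ∃ k : ℕ, x = d * s + k * γ}

/-- e_k = gcd(v₀, …, v_k). -/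
def ee (v : ℕ → ℕ) (k : ℕ) : ℕ := (Finset.range (k + 1)).gcd v

/-- (v₀,…,v_h) is a characteristic sequence. -/
def IsCharSeq (h : ℕ) (v : ℕ → ℕ) : Prop :=
  (∀ i ≤ h, 0 < v i) ∧
  (∀ k, 1 ≤ k → k ≤ h → ee v k < ee v (k - 1)) ∧
  ee v h = 1 ∧
  ∀ k, 1 ≤ k → k + 1 ≤ h → ee v (k - 1) * v k < ee v k * v (k + 1)

/-- T is a GSI-semigroup: T = S ⊕_{d,γ} ℕ where S = ⟨A⟩ is a numerical
semigroup, d ≥ 2, gcd(d,γ)=1 and γ > max{d·F(S), d·(max A)}. -/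
def IsGSI (T : Set ℕ) : Prop :=
  ∃ (A : Finset ℕ) (d γ : ℕ), A.Nonempty ∧ 2 ≤ d ∧ Nat.Coprime d γ ∧
    IsNumericalSemigroup (GenSg ↑A) ∧
    (γ : ℤ) > d * Frob (GenSg ↑A) ∧ (∀ a ∈ A, d * a < γ) ∧
    T = Gluing (GenSg ↑A) d γ

/-!
Induction on `h`. Dividing `v_0, …, v_{h-1}` by `d = e_{h-1}` gives a characteristic sequence of
length `h - 1` with semigroup `S'`, and `S = d·S' + ℕ·v_h` with `gcd(d, v_h) = 1`. For such a
gluing `F(S) = d·F(S') + (d - 1)·v_h` as soon as `v_h > d·F(S')`, and this inequality follows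
from the growth condition `n_k v_k < v_{k+1}` of characteristic sequences.
-/

section Frobenius

variable {S : Set ℕ}

theorem finite_frob_set (hfin : Sᶜ.Finite) :
    (((fun n : ℕ => (n : ℤ)) '' Sᶜ) ∪ {-1}).Finite :=
  (hfin.image _).union (Set.finite_singleton _)

theorem le_frob_of_notMem (hfin : Sᶜ.Finite) {n : ℕ} (hn : n ∉ S) : (n : ℤ) ≤ Frob S :=
  le_csSup (finite_frob_set hfin).bddAbove (Or.inl ⟨n, hn, rfl⟩)

theorem mem_of_frob_lt (hfin : Sᶜ.Finite) {n : ℕ} (hn : Frob S < n) : n ∈ S :=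
  not_not.mp fun h => (le_frob_of_notMem hfin h).not_gt hn

theorem neg_one_le_frob (hfin : Sᶜ.Finite) : -1 ≤ Frob S :=
  le_csSup (finite_frob_set hfin).bddAbove (Or.inr rfl)

theorem frob_toNat_notMem (hfin : Sᶜ.Finite) (h0 : 0 ≤ Frob S) : (Frob S).toNat ∉ S := by
  have hmem : Frob S ∈ ((fun n : ℕ => (n : ℤ)) '' Sᶜ) ∪ {-1} :=
    Set.Nonempty.csSup_mem ⟨-1, Or.inr rfl⟩ (finite_frob_set hfin)
  obtain ⟨n, hn, hnF⟩ | hF := hmem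
  · rwa [← hnF, Int.toNat_natCast]
  · exact absurd (Set.mem_singleton_iff.mp hF) (by omega)

theorem frob_eq_of_forall_lt_mem {m : ℤ} (hm : ∀ n : ℕ, m < n → n ∈ S)
    (hgreat : m = -1 ∨ ∃ n : ℕ, n ∉ S ∧ (n : ℤ) = m) : Frob S = m := by
  refine IsGreatest.csSup_eq ⟨?_, ?_⟩
  · obtain rfl | ⟨n, hn, rfl⟩ := hgreat
    exacts [Or.inr rfl, Or.inl ⟨n, hn, rfl⟩]
  · rintro x (⟨n, hn, rfl⟩ | rfl)
    · exact not_lt.mp fun h => hn (hm n h)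
    · obtain rfl | ⟨n, -, rfl⟩ := hgreat <;> omega

end Frobenius

section Gluing

variable {S : Set ℕ} {d γ : ℕ}

theorem exists_lt_dvd_sub_mul (hd : 0 < d) (hcop : Nat.Coprime d γ) (n : ℕ) :
    ∃ k < d, (d : ℤ) ∣ n - k * γ := by
  have : NeZero d := ⟨hd.ne'⟩
  have hunit : IsUnit (γ : ZMod d) := (ZMod.isUnit_iff_coprime γ d).mpr hcop.symm
  refine ⟨((n : ZMod d) * (γ : ZMod d)⁻¹).val, ZMod.val_lt _, ?_⟩
  rw [← ZMod.intCast_zmod_eq_zero_iff_dvd]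
  push_cast
  rw [ZMod.natCast_zmod_val, mul_assoc, ZMod.inv_mul_of_unit _ hunit, mul_one, sub_self]

theorem mem_gluing_of_lt (hfin : Sᶜ.Finite) (hd : 0 < d) (hcop : Nat.Coprime d γ) {n : ℕ}
    (hn : d * Frob S + (d - 1) * γ < n) : n ∈ Gluing S d γ := by
  obtain ⟨k, hkd, t, ht⟩ := exists_lt_dvd_sub_mul hd hcop n
  have hkγ : (k : ℤ) * γ ≤ (d - 1) * γ :=
    mul_le_mul_of_nonneg_right (by omega) (Int.natCast_nonneg γ)
  have htF : Frob S < t := lt_of_mul_lt_mul_left (by linarith) (Int.natCast_nonneg d)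
  have ht0 : 0 ≤ t := by linarith [neg_one_le_frob hfin]
  refine ⟨t.toNat, mem_of_frob_lt hfin (by omega), k, ?_⟩
  zify
  rw [Int.toNat_of_nonneg ht0]
  linarith

/-- If `d·F + (d - 1)·γ = d·s + k·γ`, then `k ≥ d` would give `γ ≤ d·F`, while for `k < d`
coprimality forces `k = d - 1`, and then `F = s ∈ S`. -/
theorem frob_toNat_gluing_notMem (hfin : Sᶜ.Finite) (hd : 0 < d) (hcop : Nat.Coprime d γ)
    (hγ : d * Frob S < γ) (h0 : 0 ≤ d * Frob S + (d - 1) * γ) :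
    (d * Frob S + (d - 1) * γ).toNat ∉ Gluing S d γ := by
  rintro ⟨s, hs, k, hsk⟩
  replace hsk : (d : ℤ) * Frob S + (d - 1) * γ = d * s + k * γ := by
    rw [← Int.toNat_of_nonneg h0]; exact_mod_cast hsk
  have hkd : k ≤ d - 1 := by
    by_contra hk
    have : (d : ℤ) * γ ≤ k * γ :=
      mul_le_mul_of_nonneg_right (by omega) (Int.natCast_nonneg γ)
    linarith [mul_nonneg (Int.natCast_nonneg d) (Int.natCast_nonneg s)]
  have hdvd : (d : ℤ) ∣ (d - 1 - k) * γ := ⟨s - Frob S, by linarith⟩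
  have hk : (d - 1 - k : ℤ) = 0 := by
    refine Int.eq_zero_of_dvd_of_nonneg_of_lt ?_ ?_
      ((Nat.isCoprime_iff_coprime.mpr hcop).dvd_of_dvd_mul_right hdvd) <;> omega
  have hFs : Frob S = s :=
    mul_left_cancel₀ (by omega : (d : ℤ) ≠ 0) (by linear_combination hsk - (γ : ℤ) * hk)
  exact frob_toNat_notMem hfin (hFs ▸ Int.natCast_nonneg s) (by rwa [hFs, Int.toNat_natCast])

theorem frob_gluing (hfin : Sᶜ.Finite) (hd : 2 ≤ d) (hcop : Nat.Coprime d γ)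
    (hγ : d * Frob S < γ) :
    Frob (Gluing S d γ) = d * Frob S + (d - 1) * γ := by
  refine frob_eq_of_forall_lt_mem (fun n => mem_gluing_of_lt hfin (by omega) hcop) ?_
  by_cases h0 : 0 ≤ (d : ℤ) * Frob S + (d - 1) * γ
  · exact Or.inr ⟨_, frob_toNat_gluing_notMem hfin (by omega) hcop hγ h0, Int.toNat_of_nonneg h0⟩
  · have hγ1 : (1 : ℤ) ≤ γ := by
      have : γ ≠ 0 := by rintro rfl; simp_all
      omega
    obtain hF | hF := (neg_one_le_frob hfin).eq_or_lt
    · left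
      rw [← hF] at h0 ⊢
      nlinarith
    · nlinarith

theorem finite_compl_gluing (hfin : Sᶜ.Finite) (hd : 0 < d) (hcop : Nat.Coprime d γ) :
    (Gluing S d γ)ᶜ.Finite :=
  (Set.finite_Iic (d * Frob S + (d - 1) * γ).toNat).subset fun n hn =>
    Set.mem_Iic.mpr (by
      have := mt (mem_gluing_of_lt hfin hd hcop) hn
      omega)

theorem genSg_insert_image_mul (A : Set ℕ) (d γ : ℕ) :
    GenSg (insert γ ((d * ·) '' A)) = Gluing (GenSg A) d γ := by
  have hmul : ((d * ·) '' A) = AddMonoidHom.mulLeft d '' A := rfl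
  ext x
  simp only [GenSg, Set.insert_eq, AddSubmonoid.closure_union, SetLike.mem_coe,
    AddSubmonoid.mem_sup, AddSubmonoid.mem_closure_singleton, hmul,
    ← AddMonoidHom.map_mclosure, AddSubmonoid.mem_map, Gluing, Set.mem_ofPred_eq]
  constructor
  · rintro ⟨_, ⟨k, rfl⟩, _, ⟨s, hs, rfl⟩, rfl⟩
    exact ⟨s, hs, k, by simp [add_comm]⟩
  · rintro ⟨s, hs, k, rfl⟩
    exact ⟨_, ⟨k, rfl⟩, _, ⟨s, hs, rfl⟩, by simp [add_comm]⟩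

end Gluing

section CharSeq

variable {v : ℕ → ℕ} {d h : ℕ}

theorem ee_zero (v : ℕ → ℕ) : ee v 0 = v 0 := by
  simp [ee]

theorem ee_succ (v : ℕ → ℕ) (k : ℕ) : ee v (k + 1) = Nat.gcd (v (k + 1)) (ee v k) := by
  rw [ee, ee, Finset.range_add_one, Finset.gcd_insert]
  rfl

theorem ee_dvd {i k : ℕ} (hi : i ≤ k) : ee v k ∣ v i :=
  Finset.gcd_dvd (Finset.mem_range.mpr (by omega))

theorem ee_dvd_ee {k l : ℕ} (hkl : k ≤ l) : ee v l ∣ ee v k :=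
  Finset.gcd_mono (Finset.range_subset_range.mpr (by omega))

theorem ee_div_mul {k : ℕ} (hd : ∀ i ≤ k, d ∣ v i) :
    ee (fun i => v i / d) k * d = ee v k := by
  have := Finset.gcd_mul_left (s := Finset.range (k + 1)) (f := fun i => v i / d) (a := d)
  rw [normalize_eq] at this
  rw [mul_comm, ee, ee, ← this]
  exact Finset.gcd_congr rfl fun i hi =>
    Nat.mul_div_cancel' (hd i (Nat.lt_succ_iff.mp (Finset.mem_range.mp hi)))

theorem IsCharSeq.two_le_ee (hv : IsCharSeq (h + 1) v) : 2 ≤ ee v h := by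
  have := hv.2.1 (h + 1) le_add_self le_rfl
  rw [hv.2.2.1, Nat.add_sub_cancel] at this
  omega

theorem IsCharSeq.coprime_ee (hv : IsCharSeq (h + 1) v) : Nat.Coprime (ee v h) (v (h + 1)) := by
  have := hv.2.2.1
  rwa [ee_succ, Nat.gcd_comm] at this

theorem IsCharSeq.div_ee (hv : IsCharSeq (h + 1) v) : IsCharSeq h (fun i => v i / ee v h) := by
  set d := ee v h
  have hd : 0 < d := by have := hv.two_le_ee; omega
  have hv' : ∀ i ≤ h, v i / d * d = v i := fun i hi => Nat.div_mul_cancel (ee_dvd hi)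
  have he' : ∀ k ≤ h, ee (fun i => v i / d) k * d = ee v k := fun k hk =>
    ee_div_mul fun i hi => ee_dvd (hi.trans hk)
  refine ⟨fun i hi => ?_, fun k hk1 hk => ?_, ?_, fun k hk1 hk => ?_⟩
  · exact Nat.div_pos (Nat.le_of_dvd (hv.1 i (by omega)) (ee_dvd hi)) hd
  · refine Nat.lt_of_mul_lt_mul_right (a := d) ?_
    rw [he' k hk, he' (k - 1) (by omega)]
    exact hv.2.1 k hk1 (by omega)
  · exact (mul_eq_right₀ hd.ne').mp (he' h le_rfl)
  · refine Nat.lt_of_mul_lt_mul_right (a := d * d) ?_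
    calc ee (fun i => v i / d) (k - 1) * (v k / d) * (d * d)
        = ee (fun i => v i / d) (k - 1) * d * (v k / d * d) := by ring
      _ < ee (fun i => v i / d) k * d * (v (k + 1) / d * d) := by
        rw [he' k (by omega), he' (k - 1) (by omega), hv' k (by omega), hv' (k + 1) hk]
        exact hv.2.2.2 k hk1 (by omega)
      _ = ee (fun i => v i / d) k * (v (k + 1) / d) * (d * d) := by ring

theorem IsCharSeq.div_ee_mul_lt (hv : IsCharSeq h v) {k : ℕ} (hk1 : 1 ≤ k) (hk : k + 1 ≤ h) :
    ee v (k - 1) / ee v k * v k < v (k + 1) := by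
  refine Nat.lt_of_mul_lt_mul_left (a := ee v k) ?_
  rw [← mul_assoc, Nat.mul_div_cancel' (ee_dvd_ee (Nat.sub_le k 1))]
  exact hv.2.2.2 k hk1 hk

end CharSeq

def charSeqFrob (v : ℕ → ℕ) (h : ℕ) : ℤ :=
  (∑ i ∈ Finset.Icc 1 h, (((ee v (i - 1) / ee v i : ℕ) : ℤ) - 1) * (v i : ℤ)) - (v 0 : ℤ)

section CharSeqFrob

variable {v : ℕ → ℕ} {d h : ℕ}

theorem charSeqFrob_succ (v : ℕ → ℕ) (h : ℕ) :
    charSeqFrob v (h + 1) =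
      charSeqFrob v h + (((ee v h / ee v (h + 1) : ℕ) : ℤ) - 1) * v (h + 1) := by
  rw [charSeqFrob, charSeqFrob, Finset.sum_Icc_succ_top (Nat.le_add_left 1 h), Nat.add_sub_cancel]
  ring

theorem mul_charSeqFrob_div (hd : 0 < d) (hdvd : ∀ i ≤ h, d ∣ v i) :
    d * charSeqFrob (fun i => v i / d) h = charSeqFrob v h := by
  have hv : ∀ i ≤ h, (d : ℤ) * (v i / d : ℕ) = v i := fun i hi => by
    exact_mod_cast Nat.mul_div_cancel' (hdvd i hi)
  have hn : ∀ i ≤ h, ee (fun i => v i / d) (i - 1) / ee (fun i => v i / d) i =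
      ee v (i - 1) / ee v i := fun i hi => by
    rw [← ee_div_mul (fun j hj => hdvd j (by omega)),
      ← ee_div_mul (fun j hj => hdvd j (hj.trans hi)), Nat.mul_div_mul_right _ _ hd]
  rw [charSeqFrob, charSeqFrob, mul_sub, Finset.mul_sum, hv 0 (Nat.zero_le h)]
  congr 1
  refine Finset.sum_congr rfl fun i hi => ?_
  have hi := (Finset.mem_Icc.mp hi).2
  rw [hn i hi, ← hv i hi]
  ring

/-- `charSeqFrob v (k + 1) = charSeqFrob v k + (n_{k+1} - 1) v_{k+1}`, which is below
`n_{k+1} v_{k+1} < v_{k+2}`. -/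
theorem IsCharSeq.charSeqFrob_lt (hv : IsCharSeq h v) {k : ℕ} (hk : k < h) :
    charSeqFrob v k < v (k + 1) := by
  induction k with
  | zero =>
    have h0 : charSeqFrob v 0 = -v 0 := by simp [charSeqFrob]
    rw [h0]
    linarith [hv.1 0 (Nat.zero_le h), Int.natCast_nonneg (v 1)]
  | succ k ih =>
    rw [charSeqFrob_succ]
    have hgrow : ((ee v k / ee v (k + 1) : ℕ) : ℤ) * v (k + 1) < v (k + 2) := by
      exact_mod_cast hv.div_ee_mul_lt (k := k + 1) le_add_self hk
    linarith [ih (by omega)]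

end CharSeqFrob

theorem image_le_succ_eq_insert {v : ℕ → ℕ} {d h : ℕ} (hdvd : ∀ i ≤ h, d ∣ v i) :
    v '' {i | i ≤ h + 1} =
      insert (v (h + 1)) ((d * ·) '' ((fun i => v i / d) '' {i | i ≤ h})) := by
  rw [Set.image_image]
  ext x
  constructor
  · rintro ⟨i, hi, rfl⟩
    obtain hi | rfl := Nat.lt_or_eq_of_le hi
    · exact Or.inr ⟨i, Nat.lt_succ_iff.mp hi, Nat.mul_div_cancel' (hdvd i (by omega))⟩
    · exact Or.inl rfl
  · rintro (rfl | ⟨i, hi, rfl⟩)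
    · exact ⟨h + 1, Set.mem_ofPred.mpr le_rfl, rfl⟩
    · exact ⟨i, Nat.le_succ_of_le hi, (Nat.mul_div_cancel' (hdvd i hi)).symm⟩

theorem IsCharSeq.frob_genSg {h : ℕ} {v : ℕ → ℕ} (hv : IsCharSeq h v) :
    (GenSg (v '' {i | i ≤ h}))ᶜ.Finite ∧ Frob (GenSg (v '' {i | i ≤ h})) = charSeqFrob v h := by
  induction h generalizing v with
  | zero =>
    have hv0 : v 0 = 1 := ee_zero v ▸ hv.2.2.1
    have h1 : 1 ∈ v '' {i | i ≤ 0} := ⟨0, Set.mem_ofPred.mpr le_rfl, hv0⟩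
    have huniv : GenSg (v '' {i | i ≤ 0}) = Set.univ := by
      refine Set.eq_univ_of_forall fun n => ?_
      simpa [GenSg] using AddSubmonoid.nsmul_mem _ (AddSubmonoid.subset_closure h1) n
    refine ⟨by rw [huniv, Set.compl_univ]; exact Set.finite_empty, ?_⟩
    rw [frob_eq_of_forall_lt_mem (fun n _ => huniv ▸ Set.mem_univ n) (Or.inl rfl)]
    simp [charSeqFrob, hv0]
  | succ h ih =>
    set d := ee v h
    have hdvd : ∀ i ≤ h, d ∣ v i := fun i hi => ee_dvd hi
    have hd := hv.two_le_ee
    obtain ⟨hfin, hfrob⟩ := ih hv.div_ee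
    have hdF : d * Frob (GenSg ((fun i => v i / d) '' {i | i ≤ h})) = charSeqFrob v h := by
      rw [hfrob, mul_charSeqFrob_div (by omega) hdvd]
    rw [image_le_succ_eq_insert hdvd, genSg_insert_image_mul]
    refine ⟨finite_compl_gluing hfin (by omega) hv.coprime_ee, ?_⟩
    rw [frob_gluing hfin hd hv.coprime_ee (hdF ▸ hv.charSeqFrob_lt (Nat.lt_succ_self h)), hdF,
      charSeqFrob_succ, hv.2.2.1, Nat.div_one]

theorem conductor_of_SI (h : ℕ) (v : ℕ → ℕ) (hv : IsCharSeq h v) :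
    Frob (GenSg (v '' {i | i ≤ h})) + 1 =
      (∑ i ∈ Finset.Icc 1 h,
        (((ee v (i - 1) / ee v i : ℕ) : ℤ) - 1) * (v i : ℤ)) - (v 0 : ℤ) + 1 := by
  rw [hv.frob_genSg.2, charSeqFrob]
end

section
/- Let S̄ = S ⊕_{d,γ} ℕ be a GSI-semigroup with S = ⟨v₀,…,v_h⟩, v₀ < ⋯ < v_h, d ≥ 2, gcd(d,γ)=1 and γ > max{d·F(S), d·v_h}. Then the set of gaps of S̄ is exactly the disjoint union {1,…,dv₀−1} ∪ {x ∈ (dv₀, γ) ∩ ℕ : x ∉ dS} ∪ A_d ∪ ⋃_{ℓ=1}^{d−2} B_{d,ℓ}, where A_d = ⋃_{k=1}^{d−1} (d(ℕ\S) + kγ) (empty when S = ℕ) and B_{d,ℓ} = {γ + (ℓγ mod d) + kd : 0 ≤ k ≤ ⌊ℓγ/d⌋ − 1}. -/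
/-!
Since gcd(d, γ) = 1, each x ∈ ℕ has a unique k < d with kγ ≡ x (mod d), and any expression
x = ds + k'γ has k' ≡ k (mod d); when x < (k + d)γ this forces k' = k. Hence below γ the gluing is
just dS. Above γ, a gap x with kγ ≤ x is dα + kγ with α ∉ S and k ≥ 1 (k = 0 would give
x = dα < γ, because dF(S) < γ), an element of A_d; a gap with kγ > x has k ≥ 2 and lies in
B_{d,k-1}, which consists exactly of the x ≥ γ with x < kγ and x ≡ kγ (mod d). Elements of A_d and
B_d lie below (k + d)γ, so the same uniqueness shows that they are gaps.
-/

theorem Nat.exists_eq_mod_add_mul_iff {n c d : ℕ} :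
    (∃ j, j + 1 ≤ n / d ∧ c = n % d + j * d) ↔ c < n ∧ n ≡ c [MOD d] := by
  have hn := Nat.mod_add_div n d
  constructor
  · rintro ⟨j, hj, rfl⟩
    have hd : 0 < d := Nat.pos_of_ne_zero (by rintro rfl; simp at hj)
    refine ⟨by nlinarith [Nat.mul_le_mul_left d hj], ?_⟩
    simp [Nat.ModEq]
  · rintro ⟨hc, hmod⟩
    have hc' := Nat.mod_add_div c d
    refine ⟨c / d, ?_, by rw [hmod]; linarith⟩
    by_contra! h
    have : d * (n / d) ≤ d * (c / d) := Nat.mul_le_mul_left d (by omega)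
    rw [Nat.ModEq] at hmod
    omega

theorem le_frob_of_notMem_s15 {S : Set ℕ} (hS : Sᶜ.Finite) {a : ℕ} (ha : a ∉ S) :
    (a : ℤ) ≤ Frob S :=
  le_csSup ((hS.image _).union (Set.finite_singleton _)).bddAbove (Or.inl ⟨a, ha, rfl⟩)

theorem mul_lt_of_mul_frob_lt {S : Set ℕ} (hS : Sᶜ.Finite) {d γ : ℕ} (h : d * Frob S < γ)
    {a : ℕ} (ha : a ∉ S) : d * a < γ := by
  have := mul_le_mul_of_nonneg_left (le_frob_of_notMem_s15 hS ha) (Int.natCast_nonneg d)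
  omega

theorem eq_zero_or_min'_le_of_mem_genSg {A : Finset ℕ} (hA : A.Nonempty) {s : ℕ}
    (hs : s ∈ GenSg A) : s = 0 ∨ A.min' hA ≤ s := by
  induction hs using AddSubmonoid.closure_induction with
  | mem x hx => exact Or.inr (A.min'_le x hx)
  | zero => exact Or.inl rfl
  | add a b _ _ ha hb => omega

section Gluing

variable {S : Set ℕ} {d γ : ℕ}

def gapsBelow (S : Set ℕ) (d γ : ℕ) : Set ℕ := {x | x < γ ∧ ¬ ∃ s ∈ S, x = d * s}

def gapsA (S : Set ℕ) (d γ : ℕ) : Set ℕ :=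
  {x | ∃ k, 1 ≤ k ∧ k ≤ d - 1 ∧ ∃ α, α ∉ S ∧ x = d * α + k * γ}

def gapsB (d γ : ℕ) : Set ℕ :=
  {x | ∃ l, 1 ≤ l ∧ l ≤ d - 2 ∧ ∃ k, k + 1 ≤ l * γ / d ∧ x = γ + (l * γ) % d + k * d}

theorem mem_gapsB_iff {x : ℕ} :
    x ∈ gapsB d γ ↔ γ ≤ x ∧ ∃ k, 2 ≤ k ∧ k < d ∧ x < k * γ ∧ k * γ ≡ x [MOD d] := by
  constructor
  · rintro ⟨l, hl1, hl2, j, hj, rfl⟩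
    obtain ⟨hlt, hmod⟩ := Nat.exists_eq_mod_add_mul_iff.1 ⟨j, hj, rfl⟩
    refine ⟨by omega, l + 1, by omega, by omega, by linarith, ?_⟩
    rw [add_assoc, add_one_mul, add_comm]
    exact hmod.add_left γ
  · rintro ⟨hx, k, hk2, hkd, hxk, hmod⟩
    obtain ⟨l, rfl⟩ : ∃ l, k = l + 1 := ⟨k - 1, by omega⟩
    obtain ⟨c, rfl⟩ : ∃ c, x = γ + c := ⟨x - γ, by omega⟩
    rw [add_one_mul, add_comm] at hxk hmod
    obtain ⟨j, hj, rfl⟩ := Nat.exists_eq_mod_add_mul_iff.2 ⟨by omega, Nat.ModEq.add_left_cancel' γ hmod⟩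
    exact ⟨l, by omega, by omega, j, hj, by rw [add_assoc]⟩

theorem mul_mem_gluing {s : ℕ} (hs : s ∈ S) : d * s ∈ Gluing S d γ := ⟨s, hs, 0, by simp⟩

theorem mem_gluing_iff_of_lt {x : ℕ} (hx : x < γ) : x ∈ Gluing S d γ ↔ ∃ s ∈ S, x = d * s := by
  constructor
  · rintro ⟨s, hs, k, rfl⟩
    obtain rfl : k = 0 := by
      by_contra hk
      have : γ ≤ k * γ := Nat.le_mul_of_pos_left γ (Nat.pos_of_ne_zero hk)
      omega
    exact ⟨s, hs, by simp⟩
  · rintro ⟨s, hs, rfl⟩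
    exact mul_mem_gluing hs

theorem coeff_eq_of_modEq (hco : Nat.Coprime d γ) {k k' s : ℕ} (hk : k < d)
    (hmod : k * γ ≡ d * s + k' * γ [MOD d]) (hlt : d * s + k' * γ < (k + d) * γ) : k' = k := by
  have hcoeff : k ≡ k' [MOD d] :=
    Nat.ModEq.cancel_right_of_coprime hco (hmod.trans (by simp [Nat.ModEq]))
  have hk' : k' < k + d := by
    by_contra! h
    nlinarith [Nat.mul_le_mul_right γ h]
  refine (hcoeff.eq_of_abs_lt ?_).symm
  rw [abs_lt]
  omega

theorem mem_gluing_iff_of_modEq (hco : Nat.Coprime d γ) {k x : ℕ} (hk : k < d) (hkx : k * γ ≡ x [MOD d])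
    (hx : x < (k + d) * γ) : x ∈ Gluing S d γ ↔ ∃ s ∈ S, x = d * s + k * γ := by
  constructor
  · rintro ⟨s, hs, k', rfl⟩
    exact ⟨s, hs, by rw [coeff_eq_of_modEq hco hk hkx hx]⟩
  · rintro ⟨s, hs, rfl⟩
    exact ⟨s, hs, k, rfl⟩

theorem gapsBelow_subset_compl : gapsBelow S d γ ⊆ (Gluing S d γ)ᶜ :=
  fun _ ⟨hx, hxS⟩ hmem => hxS ((mem_gluing_iff_of_lt hx).1 hmem)

theorem gapsA_subset_compl (hco : Nat.Coprime d γ) (hgap : ∀ α ∉ S, d * α < γ) :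
    gapsA S d γ ⊆ (Gluing S d γ)ᶜ := by
  rintro _ ⟨k, hk1, hkd, α, hα, rfl⟩ hmem
  have hpos : 0 < d := by omega
  have hlt : d * α + k * γ < (k + d) * γ := by
    nlinarith [hgap α hα, Nat.le_mul_of_pos_left γ hpos]
  obtain ⟨s, hs, heq⟩ :=
    (mem_gluing_iff_of_modEq hco (by omega) (by simp [Nat.ModEq]) hlt).1 hmem
  rw [Nat.add_right_cancel_iff, Nat.mul_left_cancel_iff hpos] at heq
  exact hα (heq ▸ hs)

theorem gapsB_subset_compl (hco : Nat.Coprime d γ) : gapsB d γ ⊆ (Gluing S d γ)ᶜ := by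
  intro x hx hmem
  obtain ⟨-, k, -, hkd, hxk, hmod⟩ := mem_gapsB_iff.1 hx
  obtain ⟨s, -, rfl⟩ := (mem_gluing_iff_of_modEq hco hkd hmod (by nlinarith)).1 hmem
  omega

theorem compl_gluing_subset (hco : Nat.Coprime d γ) (hd : d ≠ 0) (hgap : ∀ α ∉ S, d * α < γ) :
    (Gluing S d γ)ᶜ ⊆ gapsBelow S d γ ∪ gapsA S d γ ∪ gapsB d γ := by
  intro x hx
  rcases lt_or_ge x γ with hxγ | hγx
  · exact Or.inl (Or.inl ⟨hxγ, fun h => hx ((mem_gluing_iff_of_lt hxγ).2 h)⟩)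
  obtain ⟨k, hkd, hk⟩ := Nat.exists_mul_mod_eq_of_coprime x hco.symm hd
  rw [mul_comm] at hk
  rcases le_or_gt (k * γ) x with hkx | hxk
  · obtain ⟨α, hα⟩ := (Nat.modEq_iff_dvd' hkx).1 hk
    replace hα : x = d * α + k * γ := by omega
    have hαS : α ∉ S := fun h => hx ⟨α, h, k, hα⟩
    have hk0 : k ≠ 0 := by
      rintro rfl
      have := hgap α hαS
      simp only [zero_mul, add_zero] at hα
      omega
    exact Or.inl (Or.inr ⟨k, by omega, by omega, α, hαS, hα⟩)
  · refine Or.inr (mem_gapsB_iff.2 ⟨hγx, k, ?_, hkd, hxk, hk⟩)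
    by_contra! hk2
    interval_cases k <;> omega

theorem compl_gluing_eq (hco : Nat.Coprime d γ) (hd : d ≠ 0) (hgap : ∀ α ∉ S, d * α < γ) :
    (Gluing S d γ)ᶜ = gapsBelow S d γ ∪ gapsA S d γ ∪ gapsB d γ :=
  (compl_gluing_subset hco hd hgap).antisymm <| Set.union_subset
    (Set.union_subset gapsBelow_subset_compl (gapsA_subset_compl hco hgap))
    (gapsB_subset_compl hco)

theorem disjoint_gapsBelow_gapsA : Disjoint (gapsBelow S d γ) (gapsA S d γ) := by
  refine Set.disjoint_left.2 ?_
  rintro _ ⟨hx, -⟩ ⟨k, hk1, -, α, -, rfl⟩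
  nlinarith

theorem disjoint_gapsBelow_gapsB : Disjoint (gapsBelow S d γ) (gapsB d γ) :=
  Set.disjoint_left.2 fun _ ⟨hx, _⟩ hB => (mem_gapsB_iff.1 hB).1.not_gt hx

theorem disjoint_gapsA_gapsB (hco : Nat.Coprime d γ) : Disjoint (gapsA S d γ) (gapsB d γ) := by
  refine Set.disjoint_left.2 ?_
  rintro _ ⟨k, -, hkd, α, -, rfl⟩ hB
  obtain ⟨-, k', -, hk'd, hlt, hmod⟩ := mem_gapsB_iff.1 hB
  have hk : k' * γ ≡ k * γ [MOD d] := hmod.trans (by simp [Nat.ModEq])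
  obtain rfl := (Nat.ModEq.cancel_right_of_coprime hco hk).eq_of_lt_of_lt hk'd (by omega)
  omega

theorem union_eq_gapsBelow {v0 : ℕ} (h0 : 0 ∈ S) (hv0 : v0 ∈ S)
    (hmin : ∀ s ∈ S, s ≠ 0 → v0 ≤ s) (hv0γ : d * v0 < γ) :
    {x | 1 ≤ x ∧ x ≤ d * v0 - 1} ∪ {x | d * v0 < x ∧ x < γ ∧ ¬ ∃ s ∈ S, x = d * s} =
      gapsBelow S d γ := by
  ext x
  constructor
  · rintro (⟨hx1, hx⟩ | ⟨-, hxγ, hxS⟩)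
    · refine ⟨by omega, ?_⟩
      rintro ⟨s, hs, rfl⟩
      have hs0 : s ≠ 0 := by rintro rfl; simp at hx1
      have := Nat.mul_le_mul_left d (hmin s hs hs0)
      omega
    · exact ⟨hxγ, hxS⟩
  · rintro ⟨hxγ, hxS⟩
    have hx0 : x ≠ 0 := fun h => hxS ⟨0, h0, by simp [h]⟩
    have hxv0 : x ≠ d * v0 := fun h => hxS ⟨v0, hv0, h⟩
    by_cases hx : x < d * v0
    · exact Or.inl ⟨by omega, by omega⟩
    · exact Or.inr ⟨by omega, hxγ, hxS⟩

end Gluing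

theorem gaps_of_GSI (A : Finset ℕ) (hA : A.Nonempty) (d γ : ℕ) (hd : 2 ≤ d)
    (hco : Nat.Coprime d γ) (hS : IsNumericalSemigroup (GenSg ↑A))
    (hγF : (γ : ℤ) > d * Frob (GenSg ↑A)) (hγA : ∀ a ∈ A, d * a < γ) :
    let S : Set ℕ := GenSg ↑A
    let v0 : ℕ := A.min' hA
    let T1 : Set ℕ := {x | 1 ≤ x ∧ x ≤ d * v0 - 1}
    let T2 : Set ℕ := {x | d * v0 < x ∧ x < γ ∧ ¬ ∃ s ∈ S, x = d * s}
    let Ad : Set ℕ :=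
      {x | ∃ k, 1 ≤ k ∧ k ≤ d - 1 ∧ ∃ α, α ∉ S ∧ x = d * α + k * γ}
    let Bd : Set ℕ :=
      {x | ∃ l, 1 ≤ l ∧ l ≤ d - 2 ∧
        ∃ k, k + 1 ≤ l * γ / d ∧ x = γ + (l * γ) % d + k * d}
    (Gluing S d γ)ᶜ = T1 ∪ T2 ∪ Ad ∪ Bd ∧
    Disjoint T1 T2 ∧ Disjoint T1 Ad ∧ Disjoint T1 Bd ∧
    Disjoint T2 Ad ∧ Disjoint T2 Bd ∧ Disjoint Ad Bd := by
  intro S v0 T1 T2 Ad Bd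
  have hv0 : v0 ∈ A := A.min'_mem hA
  have hgap : ∀ α ∉ S, d * α < γ := fun α => mul_lt_of_mul_frob_lt hS.2.2 hγF
  have hT12 : T1 ∪ T2 = gapsBelow S d γ :=
    union_eq_gapsBelow (zero_mem _) (AddSubmonoid.subset_closure hv0)
      (fun s hs hs0 => (eq_zero_or_min'_le_of_mem_genSg hA hs).resolve_left hs0) (hγA v0 hv0)
  have hT1 : T1 ⊆ gapsBelow S d γ := hT12 ▸ Set.subset_union_left
  have hT2 : T2 ⊆ gapsBelow S d γ := hT12 ▸ Set.subset_union_right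
  refine ⟨hT12 ▸ compl_gluing_eq hco (by omega) hgap,
    Set.disjoint_left.2 fun x ⟨_, hx1⟩ ⟨hx2, _⟩ => by omega,
    disjoint_gapsBelow_gapsA.mono_left hT1, disjoint_gapsBelow_gapsB.mono_left hT1,
    disjoint_gapsBelow_gapsA.mono_left hT2, disjoint_gapsBelow_gapsB.mono_left hT2,
    disjoint_gapsA_gapsB hco⟩
end
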